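/- Let H be a complex Hilbert space, A : D(A) ⊆ H → H skew-selfadjoint, and for s ∈ [0,1[ let M_s, N_s : H → H be bounded linear operators with M_s selfadjoint, satisfying ρM_s + Re N_s ≥ c > 0 for some fixed ρ > 0 and all s ∈ [0,1[. If M_s → M₀ and N_s → N₀ strongly on H as s → 0+, then for every F ∈ D(∂₀) ⊆ H_ρ(ℝ,H) one has (closure(∂₀M_s + N_s + A))⁻¹ F → (closure(∂₀M₀ + N₀ + A))⁻¹ F in H_ρ(ℝ,H) as s → 0+. -/

import Mathlib

/-!
STATEMENT 13: If `ρ M_s + Re N_s ≥ c > 0` for all `s ∈ [0,1[` and `M_s → M₀`, `N_s → N₀`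
strongly as `s → 0+`, then for every `F ∈ D(∂₀) ⊆ H_ρ(ℝ,H)`:
`(closure(∂₀M_s+N_s+A))⁻¹ F → (closure(∂₀M₀+N₀+A))⁻¹ F` in `H_ρ(ℝ,H)` as `s → 0+`.
-/

noncomputable section
open MeasureTheory Filter Topology Set

/-- The exponentially weighted Lebesgue measure `exp(-2ρt) dt` on `ℝ`. -/
def wMeasure (ρ : ℝ) : Measure ℝ :=
  volume.withDensity fun t => ENNReal.ofReal (Real.exp (-2 * ρ * t))

/-- The weighted space `H_ρ(ℝ,H)`. -/
abbrev Hw (H : Type*) [NormedAddCommGroup H] (ρ : ℝ) : Type _ := Lp H 2 (wMeasure ρ)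

variable {H : Type*} [NormedAddCommGroup H] [InnerProductSpace ℂ H] [CompleteSpace H]

/-- `D` is `∂₀`, i.e. the closure in `H_ρ(ℝ,H)` of differentiation on `C¹` compactly
supported functions: its graph is the closure of the graph of the classical
derivative on `C¹` compactly supported functions. -/
def IsTimeDeriv (ρ : ℝ) (D : Hw H ρ →ₗ.[ℂ] Hw H ρ) : Prop :=
  (D.graph : Set (Hw H ρ × Hw H ρ)) = closure
    {p : Hw H ρ × Hw H ρ | ∃ g : ℝ → H, ContDiff ℝ 1 g ∧ HasCompactSupport g ∧
      ⇑p.1 =ᵐ[wMeasure ρ] g ∧ ⇑p.2 =ᵐ[wMeasure ρ] deriv g}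

/-- `Al` is the pointwise lift to `H_ρ(ℝ,H)` of the (possibly unbounded) operator `A`
on `H`: its domain is `{u : u(t) ∈ D(A) a.e. and (t ↦ A u(t)) ∈ H_ρ(ℝ,H)}` and it acts
as `(Al u)(t) = A (u(t))`. -/
def IsPointwiseLift (ρ : ℝ) (A : H →ₗ.[ℂ] H) (Al : Hw H ρ →ₗ.[ℂ] Hw H ρ) : Prop :=
  ∀ u v : Hw H ρ, (u, v) ∈ Al.graph ↔
    ∀ᵐ t ∂(wMeasure ρ), ∃ h : u t ∈ A.domain, A ⟨u t, h⟩ = v t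

/-- A densely defined closed operator `A` is skew-selfadjoint if `A* = -A`. -/
def IsSkewSelfAdjointP (A : H →ₗ.[ℂ] H) : Prop :=
  Dense (A.domain : Set H) ∧ A.IsClosed ∧ A.adjoint = -A

/-- The real part `(1/2)(M + M*)` of a bounded operator. -/
def reOp (M : H →L[ℂ] H) : H →L[ℂ] H := (2 : ℂ)⁻¹ • (M + ContinuousLinearMap.adjoint M)

/-- The pointwise (in time) lift of a bounded operator on `H` to `H_ρ(ℝ,H)`. -/
def liftL (ρ : ℝ) (M : H →L[ℂ] H) : Hw H ρ →L[ℂ] Hw H ρ :=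
  ContinuousLinearMap.compLpL 2 (wMeasure ρ) M

/-- The operator `∂₀M₀ + M₁ + A` with domain `D(∂₀) ∩ D(A)` in `H_ρ(ℝ,H)`,
where `D` plays the role of `∂₀` and `Al` the role of (the lift of) `A`. -/
def evo (ρ : ℝ) (M0 M1 : H →L[ℂ] H) (D Al : Hw H ρ →ₗ.[ℂ] Hw H ρ) :
    Hw H ρ →ₗ.[ℂ] Hw H ρ :=
  ((liftL ρ M1 : Hw H ρ →ₗ[ℂ] Hw H ρ)) +ᵥ
    ((⟨D.domain, ((liftL ρ M0 : Hw H ρ →ₗ[ℂ] Hw H ρ)).comp D.toFun⟩ : Hw H ρ →ₗ.[ℂ] Hw H ρ)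
      + Al)

/-- `S` is the everywhere defined continuous inverse of the operator `T`. -/
def IsInverseOf {E : Type*} [NormedAddCommGroup E] [NormedSpace ℂ E]
    (S : E →L[ℂ] E) (T : E →ₗ.[ℂ] E) : Prop :=
  (∀ f : E, (S f, f) ∈ T.graph) ∧ ∀ u : T.domain, S (T u) = u

/-- `χ` is the temporal cut-off operator, i.e. multiplication by the characteristic
function of the time interval `(-∞, a]`. -/
def IsCutoff (ρ a : ℝ) (χ : Hw H ρ →L[ℂ] Hw H ρ) : Prop :=
  ∀ u : Hw H ρ, ⇑(χ u) =ᵐ[wMeasure ρ] Set.indicator (Set.Iic a) ⇑u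

/-!
The operators `Tₛ = ∂₀Mₛ + Nₛ + A` are uniformly coercive on their common domain:
`Re⟨u, ∂₀Mₛu⟩ = ρ Re⟨u, Mₛu⟩` by integrating by parts against the weight `e^{-2ρt}`,
`Re⟨u, Au⟩ = 0` by skew-selfadjointness, so `Re⟨u, Tₛu⟩ ≥ c‖u‖²`, and this survives passing to
the closure. Hence `‖Sₛ‖ ≤ 1/c` uniformly. For `u` in the common domain,
`Sₛ(T₀u) - S₀(T₀u) = Sₛ(T₀u - Tₛu) → 0`, because the lifts of `Mₛ, Nₛ` converge strongly on
`H_ρ(ℝ,H)` (Banach–Steinhaus and dominated convergence). The range of `T₀` is dense since `S₀`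
inverts its closure, and the uniform bound extends the convergence to every `F`.
-/

open scoped InnerProductSpace

namespace MeasureTheory.L2

variable {α : Type*} [MeasurableSpace α] {μ : Measure α}

theorem norm_sq_eq_integral {E : Type*} [NormedAddCommGroup E] (f : Lp E 2 μ) :
    ‖f‖ ^ 2 = ∫ a, ‖f a‖ ^ 2 ∂μ := by
  have hf := Lp.aestronglyMeasurable f
  rw [Lp.norm_def, toReal_eLpNorm hf,
    lpNorm_eq_integral_norm_rpow_toReal two_ne_zero ENNReal.ofNat_ne_top hf]
  simp only [ENNReal.toReal_ofNat, Real.rpow_two]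
  exact Real.rpow_inv_natCast_pow (integral_nonneg fun _ => by positivity) two_ne_zero

theorem integrable_norm_sq {E : Type*} [NormedAddCommGroup E] (f : Lp E 2 μ) :
    Integrable (fun a => ‖f a‖ ^ 2) μ :=
  (memLp_two_iff_integrable_sq_norm (Lp.aestronglyMeasurable f)).1 (Lp.memLp f)

variable {𝕜 E : Type*} [RCLike 𝕜] [NormedAddCommGroup E] [InnerProductSpace 𝕜 E]

theorem re_inner_eq_integral (f g : Lp E 2 μ) :
    RCLike.re ⟪f, g⟫_𝕜 = ∫ a, RCLike.re ⟪f a, g a⟫_𝕜 ∂μ := by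
  rw [inner_def, ← integral_re (integrable_inner f g)]

end MeasureTheory.L2

namespace ContinuousLinearMap

variable {α : Type*} [MeasurableSpace α] {μ : Measure α}

section StrongConvergence

variable {𝕜 E F : Type*} [NontriviallyNormedField 𝕜] [NormedAddCommGroup E] [NormedSpace 𝕜 E]
  [NormedAddCommGroup F] [NormedSpace 𝕜 F]

theorem norm_compLpL_apply_sub_sq (P Q : E →L[𝕜] F) (v : Lp E 2 μ) :
    ‖compLpL 2 μ P v - compLpL 2 μ Q v‖ ^ 2 = ∫ a, ‖P (v a) - Q (v a)‖ ^ 2 ∂μ := by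
  rw [L2.norm_sq_eq_integral]
  refine integral_congr_ae ?_
  filter_upwards [Lp.coeFn_sub (compLpL 2 μ P v) (compLpL 2 μ Q v),
    coeFn_compLpL P v, coeFn_compLpL Q v] with a hsub hP hQ
  rw [hsub, Pi.sub_apply, hP, hQ]

theorem tendsto_compLpL_apply_atTop [CompleteSpace E] {P : ℕ → E →L[𝕜] F} {P₀ : E →L[𝕜] F}
    (hP : ∀ x, Tendsto (fun n => P n x) atTop (𝓝 (P₀ x))) (v : Lp E 2 μ) :
    Tendsto (fun n => compLpL 2 μ (P n) v) atTop (𝓝 (compLpL 2 μ P₀ v)) := by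
  obtain ⟨C, hC⟩ : ∃ C, ∀ n, ‖P n‖ ≤ C := banach_steinhaus fun x =>
    let ⟨C, hC⟩ := (hP x).norm.bddAbove_range
    ⟨C, fun n => hC ⟨n, rfl⟩⟩
  have hv : AEStronglyMeasurable v μ := Lp.aestronglyMeasurable v
  have hint : Tendsto (fun n => ∫ a, ‖P n (v a) - P₀ (v a)‖ ^ 2 ∂μ) atTop (𝓝 0) := by
    rw [← integral_zero α ℝ (μ := μ)]
    refine tendsto_integral_of_dominated_convergence
      (fun a => (C + ‖P₀‖) ^ 2 * ‖v a‖ ^ 2) (fun n => ?_) ?_ (fun n => ?_) ?_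
    · exact (((P n).continuous.comp_aestronglyMeasurable hv).sub
        (P₀.continuous.comp_aestronglyMeasurable hv)).norm.pow 2
    · exact (L2.integrable_norm_sq v).const_mul _
    · refine Eventually.of_forall fun a => ?_
      rw [Real.norm_of_nonneg (by positivity), ← mul_pow]
      gcongr
      calc ‖P n (v a) - P₀ (v a)‖ ≤ ‖P n‖ * ‖v a‖ + ‖P₀‖ * ‖v a‖ :=
            (norm_sub_le _ _).trans (add_le_add ((P n).le_opNorm _) (P₀.le_opNorm _))
        _ ≤ (C + ‖P₀‖) * ‖v a‖ := by nlinarith [hC n, norm_nonneg (v a)]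
    · refine Eventually.of_forall fun a => ?_
      simpa using (((hP (v a)).sub_const (P₀ (v a))).norm.pow 2)
  rw [tendsto_iff_norm_sub_tendsto_zero]
  simpa only [← norm_compLpL_apply_sub_sq, Real.sqrt_sq (norm_nonneg _), Real.sqrt_zero]
    using hint.sqrt

theorem tendsto_compLpL_apply [CompleteSpace E] {ι : Type*} {l : Filter ι}
    [l.IsCountablyGenerated] {P : ι → E →L[𝕜] F} {P₀ : E →L[𝕜] F}
    (hP : ∀ x, Tendsto (fun i => P i x) l (𝓝 (P₀ x))) (v : Lp E 2 μ) :
    Tendsto (fun i => compLpL 2 μ (P i) v) l (𝓝 (compLpL 2 μ P₀ v)) :=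
  tendsto_iff_seq_tendsto.2 fun _ hx => tendsto_compLpL_apply_atTop (fun y => (hP y).comp hx) v

end StrongConvergence

variable {𝕜 E : Type*} [RCLike 𝕜] [NormedAddCommGroup E] [InnerProductSpace 𝕜 E]

theorem re_inner_compLpL_apply_ge {K : E →L[𝕜] E} {c : ℝ}
    (hK : ∀ x, c * ‖x‖ ^ 2 ≤ RCLike.re ⟪x, K x⟫_𝕜) (u : Lp E 2 μ) :
    c * ‖u‖ ^ 2 ≤ RCLike.re ⟪u, compLpL 2 μ K u⟫_𝕜 := by
  rw [L2.norm_sq_eq_integral, L2.re_inner_eq_integral, ← integral_const_mul]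
  refine integral_mono_ae ?_ (L2.integrable_inner u _).re ?_
  · exact (L2.integrable_norm_sq u).const_mul c
  · filter_upwards [coeFn_compLpL K u] with a ha
    rw [ha]
    exact hK (u a)

end ContinuousLinearMap

theorem LinearPMap.closure_graph_subset {R E F : Type*} [CommRing R] [AddCommGroup E]
    [AddCommGroup F] [Module R E] [Module R F] [TopologicalSpace E] [TopologicalSpace F]
    [ContinuousAdd E] [ContinuousAdd F] [TopologicalSpace R] [ContinuousSMul R E]
    [ContinuousSMul R F] (T : E →ₗ.[R] F) :
    (T.closure.graph : Set (E × F)) ⊆ _root_.closure T.graph := by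
  by_cases hT : T.IsClosable
  · rw [← hT.graph_closure_eq_closure_graph, Submodule.topologicalClosure_coe]
  · rw [T.closure_def' hT]
    exact subset_closure

theorem ContinuousLinearMap.tendsto_apply_of_dense {ι 𝕜 E F : Type*} [NontriviallyNormedField 𝕜]
    [NormedAddCommGroup E] [NormedSpace 𝕜 E] [NormedAddCommGroup F] [NormedSpace 𝕜 F]
    {l : Filter ι} {S : ι → E →L[𝕜] F} {S₀ : E →L[𝕜] F} {C : ℝ} (hS : ∀ᶠ i in l, ‖S i‖ ≤ C)
    {s : Set E} (hs : Dense s) (hconv : ∀ y ∈ s, Tendsto (fun i => S i y) l (𝓝 (S₀ y)))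
    (x : E) : Tendsto (fun i => S i x) l (𝓝 (S₀ x)) := by
  rw [Metric.tendsto_nhds]
  intro ε hε
  set K := |C| + ‖S₀‖ + 1
  have hK : 0 < K := by positivity
  obtain ⟨y, hxy, hy⟩ := Metric.dense_iff.1 hs x (ε / (2 * K)) (by positivity)
  rw [Metric.mem_ball, dist_eq_norm, norm_sub_rev] at hxy
  filter_upwards [hS, Metric.tendsto_nhds.1 (hconv y hy) (ε / 2) (half_pos hε)] with i hi hiy
  rw [dist_eq_norm] at hiy ⊢
  have hsplit : S i x - S₀ x = S i (x - y) + (S i y - S₀ y) + S₀ (y - x) := by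
    simp only [map_sub]; abel
  calc ‖S i x - S₀ x‖ ≤ ‖S i (x - y)‖ + ‖S i y - S₀ y‖ + ‖S₀ (y - x)‖ := by
        rw [hsplit]; exact norm_add₃_le
    _ ≤ C * ‖x - y‖ + ‖S i y - S₀ y‖ + ‖S₀‖ * ‖x - y‖ := by
        gcongr
        · exact (S i).le_of_opNorm_le hi _
        · exact (S₀.le_opNorm _).trans_eq (by rw [norm_sub_rev])
    _ ≤ K * ‖x - y‖ + ‖S i y - S₀ y‖ := by nlinarith [le_abs_self C, norm_nonneg (x - y)]
    _ < K * (ε / (2 * K)) + ε / 2 := by gcongr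
    _ = ε := by field_simp; ring

theorem ContinuousLinearMap.tendsto_apply_of_eventually_apply_eq {ι 𝕜 E F : Type*}
    [NontriviallyNormedField 𝕜] [NormedAddCommGroup E] [NormedSpace 𝕜 E] [NormedAddCommGroup F]
    [NormedSpace 𝕜 F] {l : Filter ι} {S : ι → E →L[𝕜] F} {C : ℝ} (hS : ∀ᶠ i in l, ‖S i‖ ≤ C)
    {f : ι → E} {y : E} (hf : Tendsto f l (𝓝 y)) {x : F} (hx : ∀ᶠ i in l, S i (f i) = x) :
    Tendsto (fun i => S i y) l (𝓝 x) := by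
  rw [tendsto_iff_norm_sub_tendsto_zero]
  have hlim : Tendsto (fun i => C * ‖f i - y‖) l (𝓝 0) := by
    simpa using (tendsto_iff_norm_sub_tendsto_zero.1 hf).const_mul C
  refine squeeze_zero' (Eventually.of_forall fun _ => norm_nonneg _) ?_ hlim
  filter_upwards [hS, hx] with i hi hix
  rw [← hix, ← map_sub, norm_sub_rev (f i)]
  exact (S i).le_of_opNorm_le hi _

namespace IsInverseOf

variable {E : Type*} [NormedAddCommGroup E] [NormedSpace ℂ E] {S : E →L[ℂ] E}
  {T : E →ₗ.[ℂ] E}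

theorem apply_snd_eq_fst (hS : IsInverseOf S T) {p : E × E} (hp : p ∈ T.graph) : S p.2 = p.1 := by
  obtain ⟨x, hx, hTx⟩ := T.mem_graph_iff.1 hp
  rw [← hx, ← hTx]
  exact hS.2 x

theorem dense_range_of_closure (hS : IsInverseOf S T.closure) : Dense (Set.range T) :=
  fun y => map_mem_closure continuous_snd (T.closure_graph_subset (hS.1 y)) fun p hp =>
    LinearPMap.mem_range_iff.2 ⟨p.1, hp⟩

theorem tendsto_apply {ι : Type*} {l : Filter ι} {Tᵢ : ι → E →ₗ.[ℂ] E}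
    {Sᵢ : ι → E →L[ℂ] E} {C : ℝ} (hS : IsInverseOf S T.closure)
    (hSᵢ : ∀ᶠ i in l, IsInverseOf (Sᵢ i) (Tᵢ i).closure ∧ ‖Sᵢ i‖ ≤ C)
    (hT : ∀ x : T.domain, ∃ f : ι → E,
      (∀ᶠ i in l, ((x : E), f i) ∈ (Tᵢ i).graph) ∧ Tendsto f l (𝓝 (T x)))
    (F : E) : Tendsto (fun i => Sᵢ i F) l (𝓝 (S F)) := by
  refine ContinuousLinearMap.tendsto_apply_of_dense (hSᵢ.mono fun _ h => h.2)
    hS.dense_range_of_closure ?_ F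
  rintro _ ⟨x, rfl⟩
  obtain ⟨f, hfT, hf⟩ := hT x
  rw [hS.apply_snd_eq_fst (p := ((x : E), T x)) (T.le_graph_of_le T.le_closure (T.mem_graph x))]
  refine ContinuousLinearMap.tendsto_apply_of_eventually_apply_eq (hSᵢ.mono fun _ h => h.2) hf ?_
  filter_upwards [hSᵢ, hfT] with i hi hfi
  exact hi.1.apply_snd_eq_fst (LinearPMap.le_graph_of_le (Tᵢ i).le_closure hfi)

end IsInverseOf

theorem IsInverseOf.opNorm_le_of_coercive {E : Type*} [NormedAddCommGroup E]
    [InnerProductSpace ℂ E] {S : E →L[ℂ] E} {T : E →ₗ.[ℂ] E} (hS : IsInverseOf S T.closure)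
    {c : ℝ} (hc : 0 < c) (hT : ∀ p ∈ T.graph, c * ‖p.1‖ ^ 2 ≤ (⟪p.1, p.2⟫_ℂ).re) :
    ‖S‖ ≤ c⁻¹ := by
  have hclosed : IsClosed {p : E × E | c * ‖p.1‖ ^ 2 ≤ (⟪p.1, p.2⟫_ℂ).re} :=
    isClosed_le (by fun_prop) (Complex.continuous_re.comp continuous_inner)
  refine S.opNorm_le_bound (inv_nonneg.2 hc.le) fun f => ?_
  have hcoer : c * ‖S f‖ ^ 2 ≤ (⟪S f, f⟫_ℂ).re :=
    closure_minimal hT hclosed (T.closure_graph_subset (hS.1 f))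
  have hcs : (⟪S f, f⟫_ℂ).re ≤ ‖S f‖ * ‖f‖ := by
    simpa only [RCLike.re_to_complex] using re_inner_le_norm (𝕜 := ℂ) (S f) f
  rw [inv_mul_eq_div, le_div_iff₀ hc]
  nlinarith [norm_nonneg (S f), norm_nonneg f]

section Evolution

variable {E : Type*} [NormedAddCommGroup E] [InnerProductSpace ℂ E] {ρ : ℝ}

theorem re_inner_reOp_apply [CompleteSpace E] (N : E →L[ℂ] E) (x : E) :
    (⟪x, reOp N x⟫_ℂ).re = (⟪x, N x⟫_ℂ).re := by
  rw [reOp, smul_apply, add_apply, inner_smul_right,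
    inner_add_right, ContinuousLinearMap.adjoint_inner_right, ← inner_conj_symm (N x) x,
    Complex.add_conj]
  simp

theorem IsSkewSelfAdjointP.re_inner_apply_self [CompleteSpace E] {A : E →ₗ.[ℂ] E}
    (hA : IsSkewSelfAdjointP A) (x : A.domain) : (⟪(x : E), A x⟫_ℂ).re = 0 := by
  have hadj := LinearPMap.adjoint_isFormalAdjoint hA.1
  rw [hA.2.2] at hadj
  have h := congrArg Complex.re (hadj x x)
  rw [LinearPMap.neg_apply, inner_neg_left, Complex.neg_re, ← inner_conj_symm, Complex.conj_re] at h
  linarith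

theorem IsPointwiseLift.re_inner_eq_zero [CompleteSpace E] {A : E →ₗ.[ℂ] E}
    {Al : Hw E ρ →ₗ.[ℂ] Hw E ρ}
    (hAl : IsPointwiseLift ρ A Al) (hA : IsSkewSelfAdjointP A) {u v : Hw E ρ}
    (h : (u, v) ∈ Al.graph) : (⟪u, v⟫_ℂ).re = 0 := by
  rw [← RCLike.re_to_complex, L2.re_inner_eq_integral]
  refine integral_eq_zero_of_ae ?_
  filter_upwards [(hAl u v).1 h] with t ⟨hut, hAu⟩
  rw [← hAu, RCLike.re_to_complex]
  exact hA.re_inner_apply_self ⟨u t, hut⟩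

theorem re_inner_liftL_eq_integral (M : E →L[ℂ] E) (u v : Hw E ρ) :
    (⟪u, liftL ρ M v⟫_ℂ).re = ∫ t, (⟪u t, M (v t)⟫_ℂ).re ∂wMeasure ρ := by
  rw [← RCLike.re_to_complex, L2.re_inner_eq_integral]
  refine integral_congr_ae ?_
  filter_upwards [ContinuousLinearMap.coeFn_compLpL (p := 2) (μ := wMeasure ρ) M v] with t ht
  rw [liftL, ht, RCLike.re_to_complex]

theorem integral_wMeasure (f : ℝ → ℝ) :
    ∫ t, f t ∂wMeasure ρ = ∫ t, Real.exp (-2 * ρ * t) * f t := by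
  rw [wMeasure, integral_withDensity_eq_integral_toReal_smul (by fun_prop)
    (ae_of_all _ fun _ => ENNReal.ofReal_lt_top)]
  simp only [ENNReal.toReal_ofReal (Real.exp_nonneg _), smul_eq_mul]

theorem integral_exp_mul_re_inner_deriv {M : E →L[ℂ] E} (hM : (M : E →ₗ[ℂ] E).IsSymmetric)
    {g : ℝ → E} (hg : ContDiff ℝ 1 g) (hgc : HasCompactSupport g) :
    ∫ t, Real.exp (-2 * ρ * t) * (⟪g t, M (deriv g t)⟫_ℂ).re =
      ρ * ∫ t, Real.exp (-2 * ρ * t) * (⟪g t, M (g t)⟫_ℂ).re := by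
  set e : ℝ → ℝ := fun t => Real.exp (-2 * ρ * t)
  set q : ℝ → ℝ := fun t => (⟪g t, M (deriv g t)⟫_ℂ).re
  set r : ℝ → ℝ := fun t => (⟪g t, M (g t)⟫_ℂ).re
  have hg' : ∀ t, HasDerivAt g (deriv g t) t := fun t =>
    (hg.differentiable one_ne_zero t).hasDerivAt
  have hMg' : ∀ t, HasDerivAt (fun t => M (g t)) (M (deriv g t)) t := fun t =>
    (M.restrictScalars ℝ).hasFDerivAt.comp_hasDerivAt t (hg' t)
  have hr : ∀ t, HasDerivAt r (2 * q t) t := by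
    intro t
    have h := Complex.reCLM.hasFDerivAt.comp_hasDerivAt t ((hg' t).inner ℂ (hMg' t))
    -- symmetry of `M` makes the two terms of the product rule agree
    have hsymm : (⟪deriv g t, M (g t)⟫_ℂ).re = q t := by
      have h := hM (deriv g t) (g t)
      rw [ContinuousLinearMap.coe_coe] at h
      rw [← h, ← inner_conj_symm, Complex.conj_re]
    exact h.congr_deriv (by rw [Complex.reCLM_apply, Complex.add_re, hsymm]; ring)
  have he : ∀ t, HasDerivAt e (-2 * ρ * e t) t := fun t => by
    simpa [e, mul_comm] using ((hasDerivAt_id t).const_mul (-2 * ρ)).exp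
  have hq : Continuous q := by
    have := hg.continuous_deriv le_rfl
    fun_prop
  have hcs : ∀ f : ℝ → ℝ, Continuous f → (∀ t, g t = 0 → f t = 0) → Integrable f :=
    fun f hf h0 => hf.integrable_of_hasCompactSupport (hgc.mono fun t ht hgt => ht (h0 t hgt))
  have heq : Integrable fun t => e t * q t := hcs _ (by fun_prop) fun t ht => by simp [q, ht]
  have her : Integrable fun t => e t * r t := hcs _ (by fun_prop) fun t ht => by simp [r, ht]
  have hφ : ∫ t, (-2 * ρ * e t * r t + e t * (2 * q t)) = 0 :=
    integral_eq_zero_of_hasDerivAt_of_integrable (fun t => (he t).mul (hr t))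
      (hcs _ (by fun_prop) fun t ht => by simp [q, r, ht]) her
  have hsplit : ∫ t, (-2 * ρ * e t * r t + e t * (2 * q t)) =
      -2 * ρ * (∫ t, e t * r t) + 2 * ∫ t, e t * q t := by
    rw [← integral_const_mul, ← integral_const_mul,
      ← integral_add (her.const_mul _) (heq.const_mul _)]
    congr 1; ext t; ring
  show ∫ t, e t * q t = ρ * ∫ t, e t * r t
  linarith

theorem IsTimeDeriv.re_inner_liftL_apply {D : Hw E ρ →ₗ.[ℂ] Hw E ρ} (hD : IsTimeDeriv ρ D)
    {M : E →L[ℂ] E} (hM : (M : E →ₗ[ℂ] E).IsSymmetric) {u v : Hw E ρ} (h : (u, v) ∈ D.graph) :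
    (⟪u, liftL ρ M v⟫_ℂ).re = ρ * (⟪u, liftL ρ M u⟫_ℂ).re := by
  have hclosed : IsClosed {p : Hw E ρ × Hw E ρ |
      (⟪p.1, liftL ρ M p.2⟫_ℂ).re = ρ * (⟪p.1, liftL ρ M p.1⟫_ℂ).re} :=
    isClosed_eq (by fun_prop) (by fun_prop)
  have hmem : ((u, v) : Hw E ρ × Hw E ρ) ∈ (D.graph : Set _) := h
  rw [IsTimeDeriv] at hD
  rw [hD] at hmem
  refine closure_minimal ?_ hclosed hmem
  rintro ⟨a, b⟩ ⟨g, hg, hgc, ha, hb⟩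
  have hab : (fun t => (⟪a t, M (b t)⟫_ℂ).re) =ᵐ[wMeasure ρ]
      fun t => (⟪g t, M (deriv g t)⟫_ℂ).re := by
    filter_upwards [ha, hb] with t hat hbt
    rw [hat, hbt]
  have haa : (fun t => (⟪a t, M (a t)⟫_ℂ).re) =ᵐ[wMeasure ρ] fun t => (⟪g t, M (g t)⟫_ℂ).re := by
    filter_upwards [ha] with t hat
    rw [hat]
  show (⟪a, liftL ρ M b⟫_ℂ).re = ρ * (⟪a, liftL ρ M a⟫_ℂ).re
  rw [re_inner_liftL_eq_integral, re_inner_liftL_eq_integral, integral_congr_ae hab,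
    integral_congr_ae haa, integral_wMeasure, integral_wMeasure]
  exact integral_exp_mul_re_inner_deriv hM hg hgc

theorem evo_apply {M₀ M₁ : E →L[ℂ] E} {D Al : Hw E ρ →ₗ.[ℂ] Hw E ρ} {x : Hw E ρ}
    (hx : x ∈ D.domain ⊓ Al.domain) :
    evo ρ M₀ M₁ D Al ⟨x, hx⟩ = liftL ρ M₁ x +
      (liftL ρ M₀ (D ⟨x, (Submodule.mem_inf.1 hx).1⟩) + Al ⟨x, (Submodule.mem_inf.1 hx).2⟩) :=
  rfl

theorem evo_coercive [CompleteSpace E] {A : E →ₗ.[ℂ] E} (hA : IsSkewSelfAdjointP A)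
    {D Al : Hw E ρ →ₗ.[ℂ] Hw E ρ} (hD : IsTimeDeriv ρ D) (hAl : IsPointwiseLift ρ A Al)
    {M N : E →L[ℂ] E} (hM : IsSelfAdjoint M) {c : ℝ}
    (hpos : ∀ x : E, c * ‖x‖ ^ 2 ≤ (⟪x, ((ρ : ℂ) • M + reOp N) x⟫_ℂ).re) :
    ∀ p ∈ (evo ρ M N D Al).graph, c * ‖p.1‖ ^ 2 ≤ (⟪p.1, p.2⟫_ℂ).re := by
  rintro ⟨u, v⟩ hp
  obtain ⟨⟨x, hx⟩, rfl, rfl⟩ := (evo ρ M N D Al).mem_graph_iff.1 hp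
  have hK : ∀ y : E, c * ‖y‖ ^ 2 ≤ RCLike.re ⟪y, ((ρ : ℂ) • M + N) y⟫_ℂ := fun y => by
    simpa only [add_apply, inner_add_right, RCLike.re_to_complex, Complex.add_re,
      re_inner_reOp_apply] using hpos y
  have hlift : c * ‖x‖ ^ 2 ≤ RCLike.re ⟪x, liftL ρ ((ρ : ℂ) • M + N) x⟫_ℂ :=
    ContinuousLinearMap.re_inner_compLpL_apply_ge hK x
  have hx' : x ∈ D.domain ⊓ Al.domain := hx
  have hxD : (x, D ⟨x, (Submodule.mem_inf.1 hx').1⟩) ∈ D.graph := D.mem_graph ⟨x, _⟩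
  have hxAl : (x, Al ⟨x, (Submodule.mem_inf.1 hx').2⟩) ∈ Al.graph := Al.mem_graph ⟨x, _⟩
  change c * ‖x‖ ^ 2 ≤ (⟪x, evo ρ M N D Al ⟨x, hx'⟩⟫_ℂ).re
  rw [evo_apply, inner_add_right, inner_add_right, Complex.add_re, Complex.add_re,
    hD.re_inner_liftL_apply hM.isSymmetric hxD, hAl.re_inner_eq_zero hA hxAl, add_zero]
  simp only [liftL, ContinuousLinearMap.add_compLpL, ContinuousLinearMap.smul_compLpL, add_apply,
    smul_apply, inner_add_right, inner_smul_right, RCLike.re_to_complex, Complex.add_re,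
    Complex.re_ofReal_mul] at hlift ⊢
  linarith

theorem tendsto_evo_apply [CompleteSpace E] {ι : Type*} {l : Filter ι} [l.IsCountablyGenerated]
    {D Al : Hw E ρ →ₗ.[ℂ] Hw E ρ} {M N : ι → E →L[ℂ] E} {M₀ N₀ : E →L[ℂ] E}
    (hM : ∀ x, Tendsto (fun i => M i x) l (𝓝 (M₀ x)))
    (hN : ∀ x, Tendsto (fun i => N i x) l (𝓝 (N₀ x))) {x : Hw E ρ}
    (hx : x ∈ D.domain ⊓ Al.domain) :
    Tendsto (fun i => evo ρ (M i) (N i) D Al ⟨x, hx⟩) l (𝓝 (evo ρ M₀ N₀ D Al ⟨x, hx⟩)) := by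
  simp only [evo_apply]
  exact (ContinuousLinearMap.tendsto_compLpL_apply hN _).add
    ((ContinuousLinearMap.tendsto_compLpL_apply hM _).add tendsto_const_nhds)

end Evolution

theorem evo_solution_operators_converge_on_smooth_general
    (H : Type*) [NormedAddCommGroup H] [InnerProductSpace ℂ H] [CompleteSpace H]
    (ρ c : ℝ) (hc : 0 < c)
    (A : H →ₗ.[ℂ] H) (hA : IsSkewSelfAdjointP A)
    (M N : ℝ → H →L[ℂ] H) (hMsa : ∀ s ∈ Set.Ico (0 : ℝ) 1, IsSelfAdjoint (M s))
    (hpos : ∀ s ∈ Set.Ico (0 : ℝ) 1, ∀ x : H,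
      c * ‖x‖ ^ 2 ≤ (inner ℂ x (((ρ : ℂ) • M s + reOp (N s)) x) : ℂ).re)
    (hMconv : ∀ x : H, Filter.Tendsto (fun s => M s x) (nhdsWithin 0 (Set.Ioi 0)) (nhds (M 0 x)))
    (hNconv : ∀ x : H, Filter.Tendsto (fun s => N s x) (nhdsWithin 0 (Set.Ioi 0)) (nhds (N 0 x)))
    (D Al : Hw H ρ →ₗ.[ℂ] Hw H ρ) (hD : IsTimeDeriv ρ D) (hAl : IsPointwiseLift ρ A Al)
    (S : ℝ → (Hw H ρ →L[ℂ] Hw H ρ))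
    (hS : ∀ s ∈ Set.Ico (0 : ℝ) 1, IsInverseOf (S s) (evo ρ (M s) (N s) D Al).closure) :
    ∀ F ∈ D.domain,
      Filter.Tendsto (fun s => S s F) (nhdsWithin 0 (Set.Ioi 0)) (nhds (S 0 F)) := by
  intro F _
  refine (hS 0 ⟨le_rfl, one_pos⟩).tendsto_apply (C := c⁻¹)
    (Tᵢ := fun s => evo ρ (M s) (N s) D Al) ?_ (fun x => ?_) F
  · filter_upwards [Ico_mem_nhdsGT one_pos] with s hs
    exact ⟨hS s hs,
      (hS s hs).opNorm_le_of_coercive hc (evo_coercive hA hD hAl (hMsa s hs) (hpos s hs))⟩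
  · have hx : (x : Hw H ρ) ∈ D.domain ⊓ Al.domain := x.2
    exact ⟨fun s => evo ρ (M s) (N s) D Al ⟨x, hx⟩,
      Eventually.of_forall fun s => (evo ρ (M s) (N s) D Al).mem_graph ⟨x, hx⟩,
      tendsto_evo_apply hMconv hNconv hx⟩

theorem evo_solution_operators_converge_on_smooth
    (H : Type*) [NormedAddCommGroup H] [InnerProductSpace ℂ H] [CompleteSpace H]
    (ρ c : ℝ) (hρ : 0 < ρ) (hc : 0 < c)
    (A : H →ₗ.[ℂ] H) (hA : IsSkewSelfAdjointP A)
    (M N : ℝ → H →L[ℂ] H) (hMsa : ∀ s ∈ Set.Ico (0 : ℝ) 1, IsSelfAdjoint (M s))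
    (hpos : ∀ s ∈ Set.Ico (0 : ℝ) 1, ∀ x : H,
      c * ‖x‖ ^ 2 ≤ (inner ℂ x (((ρ : ℂ) • M s + reOp (N s)) x) : ℂ).re)
    (hMconv : ∀ x : H, Filter.Tendsto (fun s => M s x) (nhdsWithin 0 (Set.Ioi 0)) (nhds (M 0 x)))
    (hNconv : ∀ x : H, Filter.Tendsto (fun s => N s x) (nhdsWithin 0 (Set.Ioi 0)) (nhds (N 0 x)))
    (D Al : Hw H ρ →ₗ.[ℂ] Hw H ρ) (hD : IsTimeDeriv ρ D) (hAl : IsPointwiseLift ρ A Al)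
    (S : ℝ → (Hw H ρ →L[ℂ] Hw H ρ))
    (hS : ∀ s ∈ Set.Ico (0 : ℝ) 1, IsInverseOf (S s) (evo ρ (M s) (N s) D Al).closure) :
    ∀ F ∈ D.domain,
      Filter.Tendsto (fun s => S s F) (nhdsWithin 0 (Set.Ioi 0)) (nhds (S 0 F)) :=
  evo_solution_operators_converge_on_smooth_general H ρ c hc A hA M N hMsa hpos hMconv hNconv D Al
    hD hAl S hS
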